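/- Let X be a normed space and (yₙ) a sequence in X such that infₙ ‖yₙ‖ > 0 and yₙ → 0 weakly. Then (yₙ) contains a subsequence that is an essential basic sequence. -/

import Mathlib

/-!
Mazur's lemma: for a finite-dimensional subspace `E` and `κ < 1`, finitely many norming
functionals control the unit sphere of `E`; they are eventually small on the weakly null `yₙ`,
and `‖yₙ‖ ≥ c` handles large coefficients, so eventually `κ‖e‖ ≤ ‖e + r yₙ‖` for all `e ∈ E`.
Choosing the subsequence inductively with ratios `κₖ` whose products stay `≥ 1/2` gives the
Grunblum condition `‖Sₘ‖ ≤ 2‖Sₙ‖` for partial sums, `m ≤ n`. This bounds the coefficient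
functionals, which yields uniqueness of expansions and, since the coefficients of approximants
from the span converge in `𝕜`, expansions of all vectors of the closed span.
-/

open Filter Topology

variable (𝕜 : Type*) [RCLike 𝕜]
variable {X : Type*} [NormedAddCommGroup X] [NormedSpace 𝕜 X]

/-- The `n`-th partial sum `∑_{i<n} aᵢ • xᵢ` of the expansion with coefficients `a`. -/
noncomputable def partialSum (x : ℕ → X) (a : ℕ → 𝕜) (n : ℕ) : X :=
  ∑ i ∈ Finset.range n, a i • x i

/-- `v` has the expansion `v = ∑ᵢ aᵢ xᵢ` (ordered convergence of partial sums). -/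
def Expands (x : ℕ → X) (a : ℕ → 𝕜) (v : X) : Prop :=
  Filter.Tendsto (partialSum 𝕜 x a) Filter.atTop (nhds v)

/-- `(xₙ)` is a Schauder basis of `X`: every vector has a unique expansion. -/
def IsSchauderBasis (x : ℕ → X) : Prop :=
  ∀ v : X, ∃! a : ℕ → 𝕜, Expands 𝕜 x a v

/-- `(xₙ)` is an essential Schauder basis of `X`: a Schauder basis for which the canonical
map `T : L_X → X` is an isomorphism; equivalently (since `‖T‖ ≤ 1` always holds), there is
`C > 0` bounding `η(a) = supₙ ‖∑_{i<n} aᵢxᵢ‖ ≤ C‖v‖` for every expansion `v = ∑ aᵢxᵢ`,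
i.e. `‖T⁻¹‖ ≤ C`. -/
def IsEssentialBasis (x : ℕ → X) : Prop :=
  IsSchauderBasis 𝕜 x ∧
    ∃ C > 0, ∀ (a : ℕ → 𝕜) (v : X), Expands 𝕜 x a v →
      ∀ n, ‖partialSum 𝕜 x a n‖ ≤ C * ‖v‖

/-- `(xₙ)` is an essential basic sequence: an essential Schauder basis of the closure of
its linear span. -/
def IsEssentialBasicSeq (x : ℕ → X) : Prop :=
  (∀ v ∈ closure (Submodule.span 𝕜 (Set.range x) : Set X),
      ∃! a : ℕ → 𝕜, Expands 𝕜 x a v) ∧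
    ∃ C > 0, ∀ (a : ℕ → 𝕜) (v : X), Expands 𝕜 x a v →
      ∀ n, ‖partialSum 𝕜 x a n‖ ≤ C * ‖v‖

/-- The Grunblum condition with constant `M`. -/
def Grunblum (x : ℕ → X) (M : ℝ) : Prop :=
  ∀ (a : ℕ → 𝕜) (m n : ℕ), m ≤ n →
    ‖partialSum 𝕜 x a m‖ ≤ M * ‖partialSum 𝕜 x a n‖

variable {𝕜}

section PartialSum

variable (x : ℕ → X) (a : ℕ → 𝕜)

theorem partialSum_succ (k : ℕ) :
    partialSum 𝕜 x a (k + 1) = partialSum 𝕜 x a k + a k • x k :=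
  Finset.sum_range_succ _ _

theorem partialSum_sub (b : ℕ → 𝕜) (n : ℕ) :
    partialSum 𝕜 x (a - b) n = partialSum 𝕜 x a n - partialSum 𝕜 x b n := by
  simp [partialSum, sub_smul, Finset.sum_sub_distrib]

theorem partialSum_mem_span (k : ℕ) :
    partialSum 𝕜 x a k ∈ Submodule.span 𝕜 (x '' ↑(Finset.range k)) :=
  Submodule.sum_mem _ fun _ hi =>
    Submodule.smul_mem _ _ (Submodule.subset_span (Set.mem_image_of_mem x hi))

end PartialSum

theorem Expands.sub {x : ℕ → X} {a b : ℕ → 𝕜} {v w : X} (ha : Expands 𝕜 x a v)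
    (hb : Expands 𝕜 x b w) : Expands 𝕜 x (a - b) (v - w) :=
  (Tendsto.sub ha hb).congr fun n => (partialSum_sub x a b n).symm

theorem exists_partialSum_eq_of_mem_span {x : ℕ → X} {v : X}
    (hv : v ∈ Submodule.span 𝕜 (Set.range x)) :
    ∃ (a : ℕ → 𝕜) (N : ℕ), ∀ n ≥ N, partialSum 𝕜 x a n = v := by
  obtain ⟨f, rfl⟩ := Finsupp.mem_span_range_iff_exists_finsupp.1 hv
  obtain ⟨N, hN⟩ := f.support.exists_nat_subset_range
  refine ⟨f, N, fun n hn => (Finset.sum_subset (hN.trans (Finset.range_mono hn)) ?_).symm⟩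
  intro _ _ hi
  simp [Finsupp.notMem_support_iff.1 hi]

namespace Grunblum

variable {x : ℕ → X} {M : ℝ}

theorem norm_partialSum_le (hG : Grunblum 𝕜 x M) {a : ℕ → 𝕜} {v : X}
    (h : Expands 𝕜 x a v) (n : ℕ) : ‖partialSum 𝕜 x a n‖ ≤ M * ‖v‖ :=
  ge_of_tendsto (h.norm.const_mul M) ((eventually_ge_atTop n).mono fun _ hk => hG a n _ hk)

theorem norm_coeff_mul_le (hG : Grunblum 𝕜 x M) {a : ℕ → 𝕜} {v : X}
    (h : Expands 𝕜 x a v) (i : ℕ) : ‖a i‖ * ‖x i‖ ≤ 2 * M * ‖v‖ :=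
  calc ‖a i‖ * ‖x i‖ = ‖partialSum 𝕜 x a (i + 1) - partialSum 𝕜 x a i‖ := by
        rw [partialSum_succ, add_sub_cancel_left, norm_smul]
    _ ≤ ‖partialSum 𝕜 x a (i + 1)‖ + ‖partialSum 𝕜 x a i‖ := norm_sub_le _ _
    _ ≤ M * ‖v‖ + M * ‖v‖ := add_le_add (hG.norm_partialSum_le h _) (hG.norm_partialSum_le h _)
    _ = 2 * M * ‖v‖ := by ring

theorem coeff_eq_of_expands (hG : Grunblum 𝕜 x M) (hx : ∀ i, x i ≠ 0) {a b : ℕ → 𝕜} {v : X}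
    (ha : Expands 𝕜 x a v) (hb : Expands 𝕜 x b v) : a = b := by
  funext i
  have h := hG.norm_coeff_mul_le (ha.sub hb) i
  rw [sub_self, norm_zero, mul_zero] at h
  have h' : ‖(a - b) i‖ ≤ 0 := nonpos_of_mul_nonpos_left h (norm_pos_iff.2 (hx i))
  exact sub_eq_zero.1 (norm_le_zero_iff.1 h')

theorem exists_expands_of_mem_closure (hG : Grunblum 𝕜 x M) (hx : ∀ i, x i ≠ 0) {v : X}
    (hv : v ∈ closure (Submodule.span 𝕜 (Set.range x) : Set X)) : ∃ a, Expands 𝕜 x a v := by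
  obtain ⟨u, hu_mem, hu⟩ := mem_closure_iff_seq_limit.1 hv
  choose b N hb using fun j => exists_partialSum_eq_of_mem_span (hu_mem j)
  have hexp : ∀ j, Expands 𝕜 x (b j) (u j) := fun j => tendsto_atTop_of_eventually_const (hb j)
  have hcoeff : ∀ i, CauchySeq fun j => b j i := by
    intro i
    have hdist := (cauchySeq_iff_tendsto_dist_atTop_0.1 hu.cauchySeq).const_mul (2 * M / ‖x i‖)
    rw [mul_zero] at hdist
    refine cauchySeq_iff_tendsto_dist_atTop_0.2
      (squeeze_zero (fun _ => dist_nonneg) (fun p => ?_) hdist)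
    rw [dist_eq_norm, dist_eq_norm, div_mul_eq_mul_div, le_div_iff₀ (norm_pos_iff.2 (hx i))]
    simpa using hG.norm_coeff_mul_le ((hexp p.1).sub (hexp p.2)) i
  choose a ha using fun i => cauchySeq_tendsto_of_complete (hcoeff i)
  have hclose : ∀ j, ∀ n ≥ N j, ‖partialSum 𝕜 x a n - v‖ ≤ (M + 1) * ‖u j - v‖ := by
    intro j n hn
    have hlim : Tendsto (fun k => partialSum 𝕜 x (b k) n) atTop (𝓝 (partialSum 𝕜 x a n)) :=
      tendsto_finsetSum _ fun i _ => (ha i).smul_const (x i)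
    have hj : ‖partialSum 𝕜 x a n - u j‖ ≤ M * ‖v - u j‖ := by
      refine le_of_tendsto_of_tendsto ((hlim.sub_const (u j)).norm)
        (((hu.sub_const (u j)).norm).const_mul M) (Eventually.of_forall fun k => ?_)
      have hk := hG.norm_partialSum_le ((hexp k).sub (hexp j)) n
      rwa [partialSum_sub, hb j n hn] at hk
    calc ‖partialSum 𝕜 x a n - v‖ ≤ ‖partialSum 𝕜 x a n - u j‖ + ‖u j - v‖ :=
          norm_sub_le_norm_sub_add_norm_sub _ _ _
      _ ≤ M * ‖v - u j‖ + ‖u j - v‖ := by gcongr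
      _ = (M + 1) * ‖u j - v‖ := by rw [norm_sub_rev]; ring
  refine ⟨a, Metric.tendsto_atTop.2 fun ε hε => ?_⟩
  obtain ⟨j, hj⟩ := (((tendsto_iff_norm_sub_tendsto_zero.1 hu).const_mul (M + 1)).eventually
    (gt_mem_nhds (by simpa using hε))).exists
  exact ⟨N j, fun n hn => by rw [dist_eq_norm]; exact (hclose j n hn).trans_lt hj⟩

theorem isEssentialBasicSeq (hG : Grunblum 𝕜 x M) (hx : ∀ i, x i ≠ 0) :
    IsEssentialBasicSeq 𝕜 x := by
  refine ⟨fun v hv => ?_, max M 1, lt_max_of_lt_right one_pos, fun a v h n => ?_⟩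
  · obtain ⟨a, ha⟩ := hG.exists_expands_of_mem_closure hx hv
    exact ⟨a, ha, fun b hb => hG.coeff_eq_of_expands hx hb ha⟩
  · exact (hG.norm_partialSum_le h n).trans (by gcongr; exact le_max_left _ _)

end Grunblum

theorem grunblum_of_mul_norm_le_norm_add_smul {x : ℕ → X} {q : ℕ → ℝ} {M : ℝ}
    (hq : ∀ k, 0 < q k) (hqM : ∀ m n, m ≤ n → q m ≤ M * q n)
    (hx : ∀ k, ∀ e ∈ Submodule.span 𝕜 (x '' ↑(Finset.range k)), ∀ r : 𝕜,
      q (k + 1) / q k * ‖e‖ ≤ ‖e + r • x k‖) :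
    Grunblum 𝕜 x M := by
  intro a m n hmn
  have hmono : Monotone fun k => ‖partialSum 𝕜 x a k‖ / q k := by
    refine monotone_nat_of_le_succ fun k => ?_
    have hk := hx k _ (partialSum_mem_span x a k) (a k)
    rw [← partialSum_succ, div_mul_eq_mul_div, div_le_iff₀ (hq k)] at hk
    rw [div_le_div_iff₀ (hq k) (hq (k + 1))]
    linarith
  have hMq : 0 ≤ M * q n := (hq m).le.trans (hqM m n hmn)
  calc ‖partialSum 𝕜 x a m‖ = q m * (‖partialSum 𝕜 x a m‖ / q m) := by
        rw [mul_div_cancel₀ _ (hq m).ne']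
    _ ≤ M * q n * (‖partialSum 𝕜 x a n‖ / q n) :=
        mul_le_mul (hqM m n hmn) (hmono hmn) (div_nonneg (norm_nonneg _) (hq m).le) hMq
    _ = M * ‖partialSum 𝕜 x a n‖ := by
        rw [mul_assoc, mul_div_cancel₀ _ (hq n).ne']

theorem exists_finset_dual_norming {K : Set X} (hK : IsCompact K) {δ : ℝ} (hδ : 0 < δ) :
    ∃ F : Finset (X →L[𝕜] 𝕜), (∀ f ∈ F, ‖f‖ ≤ 1) ∧ ∀ u ∈ K, ∃ f ∈ F, ‖u‖ - δ < ‖f u‖ := by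
  obtain ⟨F, hF⟩ := hK.elim_finite_subcover
    (fun f : {f : X →L[𝕜] 𝕜 // ‖f‖ ≤ 1} => {u | ‖u‖ - δ < ‖f.1 u‖})
    (fun f => isOpen_lt (by fun_prop) (by fun_prop)) fun u _ => by
      obtain ⟨g, hg, hgu⟩ := exists_dual_vector'' 𝕜 u
      exact Set.mem_iUnion.2 ⟨⟨g, hg⟩, by simp [hgu, hδ]⟩
  refine ⟨F.map (Function.Embedding.subtype _), fun f hf => ?_, fun u hu => ?_⟩
  · obtain ⟨g, -, rfl⟩ := Finset.mem_map.1 hf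
    exact g.2
  · obtain ⟨f, hfF, hf⟩ := Set.mem_iUnion₂.1 (hF hu)
    exact ⟨f.1, Finset.mem_map_of_mem _ hfF, hf⟩

theorem mul_norm_le_norm_add_smul_of_norm_eq_one {E : Submodule 𝕜 X} {w : X} {κ : ℝ}
    (h : ∀ u ∈ E, ‖u‖ = 1 → ∀ r : 𝕜, κ ≤ ‖u + r • w‖) {e : X} (he : e ∈ E) (r : 𝕜) :
    κ * ‖e‖ ≤ ‖e + r • w‖ := by
  rcases eq_or_ne e 0 with rfl | he0
  · simp
  set t : 𝕜 := (‖e‖ : 𝕜)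
  have ht : t ≠ 0 := by simpa [t] using he0
  have hu := h _ (E.smul_mem t⁻¹ he) (norm_smul_inv_norm he0) (t⁻¹ * r)
  have hsplit : e + r • w = t • (t⁻¹ • e + (t⁻¹ * r) • w) := by
    rw [smul_add, smul_smul, smul_smul, mul_inv_cancel₀ ht, ← mul_assoc, mul_inv_cancel₀ ht,
      one_smul, one_mul]
  have htn : ‖t‖ = ‖e‖ := by simp [t]
  rw [hsplit, norm_smul, htn, mul_comm κ]
  exact mul_le_mul_of_nonneg_left hu (norm_nonneg e)

theorem eventually_mul_norm_le_norm_add_smul (E : Submodule 𝕜 X) [FiniteDimensional 𝕜 E]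
    {y : ℕ → X} {c : ℝ} (hc : 0 < c) (hy : ∀ n, c ≤ ‖y n‖)
    (hweak : ∀ f : X →L[𝕜] 𝕜, Tendsto (fun n => f (y n)) atTop (𝓝 0)) {κ : ℝ} (hκ : κ < 1) :
    ∀ᶠ n in atTop, ∀ e ∈ E, ∀ r : 𝕜, κ * ‖e‖ ≤ ‖e + r • y n‖ := by
  set δ := (1 - κ) / 2
  have hδ : 0 < δ := by simp only [δ]; linarith
  obtain ⟨F, hF1, hFK⟩ := exists_finset_dual_norming (𝕜 := 𝕜)
    ((isCompact_sphere (0 : E) 1).image continuous_subtype_val) hδ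
  have hsmall : ∀ᶠ n in atTop, ∀ f ∈ F, ‖f (y n)‖ < δ * c / 2 :=
    (eventually_all_finset F).2 fun f _ =>
      (hweak f).norm.eventually (gt_mem_nhds (by simpa using by positivity))
  filter_upwards [hsmall] with n hn e he r
  refine mul_norm_le_norm_add_smul_of_norm_eq_one (fun u hu hu1 r => ?_) he r
  obtain ⟨f, hfF, hfu⟩ := hFK u ⟨⟨u, hu⟩, by simpa using hu1, rfl⟩
  rcases le_or_gt (2 / c) ‖r‖ with hr | hr
  · have hry : 2 ≤ ‖r • y n‖ := by
      rw [norm_smul]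
      calc (2 : ℝ) = 2 / c * c := by field_simp
        _ ≤ ‖r‖ * ‖y n‖ := mul_le_mul hr (hy n) hc.le (norm_nonneg _)
    have := norm_sub_norm_le (r • y n) (-u)
    rw [norm_neg, sub_neg_eq_add, add_comm] at this
    linarith
  · have hrf : ‖r‖ * ‖f (y n)‖ ≤ δ := by
      calc ‖r‖ * ‖f (y n)‖ ≤ 2 / c * (δ * c / 2) := mul_le_mul hr.le (hn f hfF).le
            (norm_nonneg _) (by positivity)
        _ = δ := by field_simp
    calc κ = 1 - δ - δ := by simp only [δ]; ring
      _ ≤ ‖f u‖ - ‖r‖ * ‖f (y n)‖ := by rw [hu1] at hfu; linarith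
      _ ≤ ‖f (u + r • y n)‖ := by
          rw [map_add, map_smul, smul_eq_mul, ← norm_mul]
          have := norm_sub_norm_le (f u) (-(r * f (y n)))
          rw [norm_neg, sub_neg_eq_add] at this
          linarith
      _ ≤ ‖u + r • y n‖ := by simpa using f.le_of_opNorm_le (hF1 f hfF) (u + r • y n)

theorem exists_strictMono_forall_image_range {P : Finset ℕ → ℕ → ℕ → Prop}
    (h : ∀ s k, ∀ᶠ n in atTop, P s k n) :
    ∃ φ : ℕ → ℕ, StrictMono φ ∧ ∀ k, P ((Finset.range k).image φ) k (φ k) := by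
  choose N hN using fun s k => ((h s k).and (eventually_gt_atTop (s.sup id))).exists
  let chosen : ℕ → Finset ℕ := fun k => Nat.rec ∅ (fun k s => insert (N s k) s) k
  have hchosen : ∀ k, chosen k = (Finset.range k).image fun j => N (chosen j) j := by
    intro k
    induction k with
    | zero => rfl
    | succ k ih => rw [Finset.range_add_one, Finset.image_insert, ← ih]
  refine ⟨fun k => N (chosen k) k, strictMono_nat_of_lt_succ fun k => ?_, fun k => ?_⟩
  · have hk : N (chosen k) k ∈ chosen (k + 1) := Finset.mem_insert_self _ _
    exact (Finset.le_sup (f := id) hk).trans_lt (hN _ _).2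
  · rw [← hchosen]
    exact (hN _ _).1

variable (𝕜)

/-- a sequence with `infₙ ‖yₙ‖ > 0` converging weakly to `0` contains a
subsequence which is an essential basic sequence. -/
theorem stmt14 (y : ℕ → X) (c : ℝ) (hc : 0 < c) (hinf : ∀ n, c ≤ ‖y n‖)
    (hweak : ∀ f : X →L[𝕜] 𝕜, Filter.Tendsto (fun n => f (y n)) Filter.atTop (nhds (0 : 𝕜))) :
    ∃ φ : ℕ → ℕ, StrictMono φ ∧ IsEssentialBasicSeq 𝕜 (y ∘ φ) := by
  -- `q` decreases from `2` to `1`, so the ratios `q (k + 1) / q k < 1` have product `≥ 1 / 2`.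
  set q : ℕ → ℝ := fun k => 1 + 2⁻¹ ^ k
  have hq_pos : ∀ k, 0 < q k := fun k => by positivity
  have hq_lt : ∀ k, q (k + 1) / q k < 1 := fun k => by
    rw [div_lt_one (hq_pos k)]
    exact add_lt_add_right
      (pow_lt_pow_right_of_lt_one₀ (by norm_num) (by norm_num) k.lt_succ_self) 1
  have hq_le : ∀ m n, m ≤ n → q m ≤ 2 * q n := fun m n _ => by
    have := pow_le_one₀ (n := m) (by norm_num : (0 : ℝ) ≤ 2⁻¹) (by norm_num)
    have : 0 ≤ (2⁻¹ : ℝ) ^ n := by positivity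
    simp only [q]
    linarith
  obtain ⟨φ, hφ, hstep⟩ := exists_strictMono_forall_image_range fun s k =>
    have := FiniteDimensional.span_of_finite 𝕜 (s.finite_toSet.image y)
    eventually_mul_norm_le_norm_add_smul (Submodule.span 𝕜 (y '' ↑s)) hc hinf hweak (hq_lt k)
  have hG : Grunblum 𝕜 (y ∘ φ) 2 := grunblum_of_mul_norm_le_norm_add_smul hq_pos hq_le
    fun k => by simpa [Set.image_image] using hstep k
  exact ⟨φ, hφ, hG.isEssentialBasicSeq fun n => norm_pos_iff.1 (hc.trans_le (hinf _))⟩
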